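/- Let (f, g) be a Jacobian pair. Then K(f,g) = K(x,y) if and only if K[f,g] = K[x,y]; that is, f and g generate the rational function field K(x,y) over K if and only if they generate the polynomial ring K[x,y] over K. -/

import Mathlib

/-! The Jacobian condition yields `K`-derivations `D₁`, `D₂` of `K[x,y]`, combinations of `∂ₓ`
and `∂ᵧ`, with `D₁ f = 1`, `D₁ g = 0` and `D₂ g = 1`. They forbid a prime `p` to divide both
`f - a` and `g - b`: writing `g - b = p v`, `D₂` gives `p ∤ v`, so `D₁` gives `p ∣ D₁ p`, while
`p ∣ f - a` gives `p ∤ D₁ p`.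

Let `φ : K[F,G] → K[x,y]` send `F ↦ f`, `G ↦ g`, and write an element of `K[x,y] ∩ K(f,g)` as
`φ P / φ Q` with `P`, `Q` coprime. A prime factor `p` of `φ Q` would make `φ⁻¹(p)` a prime ideal
containing `P` and `Q`, hence (by a resultant) nonzero polynomials in `F` alone and in `G` alone,
hence `F - a` and `G - b` as `K` is algebraically closed. So `φ Q` is a unit and the element
lies in `K[f,g]`. -/

open Polynomial

noncomputable section

/-- The partial derivative with respect to the inner variable `x` of `f ∈ K[x][y]`. -/
def dx {K : Type*} [CommRing K] (f : Polynomial (Polynomial K)) : Polynomial (Polynomial K) :=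
  f.sum fun n c => Polynomial.C (Polynomial.derivative c) * Polynomial.X ^ n

/-- The subfield `K(f,g)` of the rational function field `K(x,y)` generated over `K`
by `f` and `g`. -/
def subfieldGen {K : Type*} [Field K] (f g : Polynomial (Polynomial K)) :
    Subfield (FractionRing (Polynomial (Polynomial K))) :=
  Subfield.closure
    (Set.range (fun c : K =>
        algebraMap (Polynomial (Polynomial K)) (FractionRing (Polynomial (Polynomial K)))
          (Polynomial.C (Polynomial.C c))) ∪
      {algebraMap (Polynomial (Polynomial K)) (FractionRing (Polynomial (Polynomial K))) f,
       algebraMap (Polynomial (Polynomial K)) (FractionRing (Polynomial (Polynomial K))) g})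

open Polynomial.Bivariate

section PartialDerivatives

variable {R : Type*} [CommRing R]

def derivX : Derivation R R[X][Y] R[X][Y] :=
  PolynomialModule.equivPolynomialSelf.compDer (derivative' : Derivation R R[X] R[X]).mapCoeffs

def derivY : Derivation R R[X][Y] R[X][Y] :=
  (derivative' : Derivation R[X] R[X][Y] R[X][Y]).restrictScalars R

theorem derivY_apply (p : R[X][Y]) : derivY p = derivative p := rfl

theorem coeff_dx (p : R[X][Y]) (n : ℕ) : (dx p).coeff n = derivative (p.coeff n) := by
  simp only [dx, Polynomial.sum_def, finsetSum_coeff, coeff_C_mul_X_pow, Finset.sum_ite_eq]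
  split_ifs with h
  · rfl
  · rw [notMem_support_iff.mp h, derivative_zero]

theorem derivX_apply (p : R[X][Y]) : derivX p = dx p := by
  ext1 n
  rw [coeff_dx]
  rfl

end PartialDerivatives

section Derivations

variable {R A : Type*} [CommRing R] [CommRing A] [Algebra R A]

theorem Derivation.exists_apply_eq_one_apply_eq_zero (D₁ D₂ : Derivation R A A) {f g : A}
    (h : IsUnit (D₁ f * D₂ g - D₂ f * D₁ g)) : ∃ D : Derivation R A A, D f = 1 ∧ D g = 0 := by
  obtain ⟨u, hu⟩ := h
  refine ⟨(↑u⁻¹ : A) • (D₂ g • D₁ - D₁ g • D₂), ?_, ?_⟩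
  · simp only [Derivation.smul_apply, Derivation.sub_apply, smul_eq_mul]
    rw [← Units.inv_mul u, hu]; ring
  · simp only [Derivation.smul_apply, Derivation.sub_apply, smul_eq_mul]
    ring

theorem Derivation.dvd_apply_mul_iff (D : Derivation R A A) (p u : A) :
    p ∣ D (p * u) ↔ p ∣ u * D p := by
  rw [D.leibniz, smul_eq_mul, smul_eq_mul]
  exact dvd_add_right (dvd_mul_right p _)

theorem Prime.not_dvd_sub_algebraMap {D₁ D₂ : Derivation R A A} {f g p : A} (hp : Prime p)
    (h₁f : D₁ f = 1) (h₁g : D₁ g = 0) (h₂g : D₂ g = 1) {a : R} (ha : p ∣ f - algebraMap R A a)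
    (b : R) : ¬ p ∣ g - algebraMap R A b := by
  obtain ⟨u, hu⟩ := ha
  rintro ⟨v, hv⟩
  have hpu : D₁ (p * u) = 1 := by rw [← hu, map_sub, h₁f, D₁.map_algebraMap, sub_zero]
  have hpv₁ : D₁ (p * v) = 0 := by rw [← hv, map_sub, h₁g, D₁.map_algebraMap, sub_zero]
  have hpv₂ : D₂ (p * v) = 1 := by rw [← hv, map_sub, h₂g, D₂.map_algebraMap, sub_zero]
  have hp1 : ¬ p ∣ 1 := fun h => hp.not_isUnit (isUnit_of_dvd_one h)
  have hD₁p : ¬ p ∣ D₁ p := fun h => hp1 <| by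
    rw [← hpu, D₁.dvd_apply_mul_iff]; exact dvd_mul_of_dvd_right h u
  have hvD₁p : p ∣ v * D₁ p := by rw [← D₁.dvd_apply_mul_iff, hpv₁]; exact dvd_zero p
  have hpv : p ∣ v := (hp.dvd_or_dvd hvD₁p).resolve_right hD₁p
  exact hp1 (by rw [← hpv₂, D₂.dvd_apply_mul_iff]; exact dvd_mul_of_dvd_left hpv _)

end Derivations

theorem Ideal.IsPrime.exists_X_sub_C_mem {K : Type*} [Field K] [IsAlgClosed K] {J : Ideal K[X]}
    (hJ : J.IsPrime) {s : K[X]} (hs : s ≠ 0) (hsJ : s ∈ J) : ∃ a : K, X - C a ∈ J := by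
  rw [← C_leadingCoeff_mul_prod_multiset_X_sub_C (p := s)
    IsAlgClosed.card_roots_eq_natDegree] at hsJ
  obtain h | h := hJ.mem_or_mem hsJ
  · exact absurd (J.eq_top_of_isUnit_mem h (isUnit_C.mpr (leadingCoeff_ne_zero.mpr hs).isUnit))
      hJ.ne_top
  · obtain ⟨_, hmem, h⟩ := (hJ.multiset_prod_mem_iff_exists_mem _).mp h
    obtain ⟨a, -, rfl⟩ := Multiset.mem_map.mp hmem
    exact ⟨a, h⟩

section Gauss

variable {R F : Type*} [CommRing R] [IsDomain R] [NormalizedGCDMonoid R] [Field F] [Algebra R F]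
  [IsFractionRing R F]

theorem IsRelPrime.map_fraction_map {P Q : R[X]} (h : IsRelPrime P Q) :
    IsRelPrime (P.map (algebraMap R F)) (Q.map (algebraMap R F)) := by
  intro d hdP hdQ
  have hd : d ≠ 0 := by
    rintro rfl
    have hinj := Polynomial.map_injective _ (IsFractionRing.injective R F)
    obtain hP | hQ := h.ne_zero_or_ne_zero
    exacts [hP (hinj (by simpa using hdP)), hQ (hinj (by simpa using hdQ))]
  obtain ⟨c, hc, hcd⟩ := IsLocalization.integerNormalization_spec (nonZeroDivisors R) d
  set N := IsLocalization.integerNormalization (nonZeroDivisors R) d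
  have hNd : N.primPart.map (algebraMap R F) ∣ d := by
    have h1 : N.primPart.map (algebraMap R F) ∣ N.map (algebraMap R F) :=
      Polynomial.map_dvd _ N.primPart_dvd
    rwa [hcd, Algebra.smul_def, Polynomial.algebraMap_apply, IsUnit.dvd_mul_left] at h1
    exact isUnit_C.mpr (isUnit_iff_ne_zero.mpr (by simpa using nonZeroDivisors.ne_zero hc))
  have hNP := N.isPrimitive_primPart.dvd_of_fraction_map_dvd_fraction_map (hNd.trans hdP)
  have hNQ := N.isPrimitive_primPart.dvd_of_fraction_map_dvd_fraction_map (hNd.trans hdQ)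
  exact isUnit_or_eq_zero_of_isUnit_integerNormalization_primPart hd (h hNP hNQ)

theorem exists_C_mem_span_pair_of_isRelPrime {P Q : R[X]} (h : IsRelPrime P Q) :
    ∃ s ≠ 0, C s ∈ Ideal.span {P, Q} := by
  by_cases hdeg : P.natDegree = 0 ∧ Q.natDegree = 0
  · rw [eq_C_of_natDegree_eq_zero hdeg.1, eq_C_of_natDegree_eq_zero hdeg.2] at h ⊢
    obtain hP | hQ := h.ne_zero_or_ne_zero
    · exact ⟨_, C_ne_zero.mp hP, Ideal.subset_span (by simp)⟩
    · exact ⟨_, C_ne_zero.mp hQ, Ideal.subset_span (by simp)⟩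
  obtain ⟨U, V, -, -, hUV⟩ := exists_mul_add_mul_eq_C_resultant P Q le_rfl le_rfl (by tauto)
  refine ⟨resultant P Q, ?_, hUV ▸ Ideal.mem_span_pair.mpr ⟨U, V, by ring⟩⟩
  have hinj := IsFractionRing.injective R (FractionRing R)
  have := resultant_ne_zero _ _ (isRelPrime_iff_isCoprime.mp
    (h.map_fraction_map (F := FractionRing R)))
  rwa [natDegree_map_eq_of_injective hinj, natDegree_map_eq_of_injective hinj,
    resultant_map_map, map_ne_zero_iff _ hinj] at this

end Gauss

section Points

variable {K A : Type*} [Field K] [IsAlgClosed K] [CommRing A] [Algebra K A]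

theorem exists_sub_algebraMap_mem_of_isRelPrime {𝔭 : Ideal A} (h𝔭 : 𝔭.IsPrime) (f g : A)
    {P Q : K[X][Y]} (hPQ : IsRelPrime P Q) (hP : aevalAeval f g P ∈ 𝔭)
    (hQ : aevalAeval f g Q ∈ 𝔭) : ∃ a : K, f - algebraMap K A a ∈ 𝔭 := by
  classical -- for the `NormalizedGCDMonoid K[X]` instance
  obtain ⟨s, hs, hsPQ⟩ := exists_C_mem_span_pair_of_isRelPrime hPQ
  have hPQ𝔭 : Ideal.span {P, Q} ≤ 𝔭.comap (aevalAeval f g) :=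
    Ideal.span_le.mpr (Set.insert_subset_iff.mpr ⟨hP, Set.singleton_subset_iff.mpr hQ⟩)
  obtain ⟨a, ha⟩ := (h𝔭.comap (aevalAeval f g)).comap C |>.exists_X_sub_C_mem hs (hPQ𝔭 hsPQ)
  exact ⟨a, by simpa using ha⟩

theorem not_prime_dvd_aevalAeval_of_isRelPrime {D₁ D₂ : Derivation K A A} {f g p : A}
    (h₁f : D₁ f = 1) (h₁g : D₁ g = 0) (h₂g : D₂ g = 1) (hp : Prime p) {P Q : K[X][Y]}
    (hPQ : IsRelPrime P Q) (hP : p ∣ aevalAeval f g P) : ¬ p ∣ aevalAeval f g Q := by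
  intro hQ
  have h𝔭 := (Ideal.span_singleton_prime hp.ne_zero).mpr hp
  simp only [← Ideal.mem_span_singleton] at hP hQ
  obtain ⟨a, ha⟩ := exists_sub_algebraMap_mem_of_isRelPrime h𝔭 f g hPQ hP hQ
  have hPQ' : IsRelPrime (swap P) (swap Q) := .of_map swap (by simpa [swap_swap_apply] using hPQ)
  obtain ⟨b, hb⟩ := exists_sub_algebraMap_mem_of_isRelPrime h𝔭 g f hPQ'
    (by rwa [aevalAeval_swap]) (by rwa [aevalAeval_swap])
  rw [Ideal.mem_span_singleton] at ha hb
  exact hp.not_dvd_sub_algebraMap h₁f h₁g h₂g ha b hb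

end Points

theorem aevalAeval_mem_adjoin {R A : Type*} [CommSemiring R] [CommSemiring A] [Algebra R A]
    (x y : A) (P : R[X][Y]) : aevalAeval x y P ∈ Algebra.adjoin R {x, y} := by
  induction P using Polynomial.induction_on' with
  | add P Q hP hQ => rw [map_add]; exact add_mem hP hQ
  | monomial n q =>
    rw [← C_mul_X_pow_eq_monomial, map_mul, map_pow, aevalAeval_C, aevalAeval_Y]
    exact mul_mem (Algebra.adjoin_mono (by simp) (aeval_mem_adjoin_singleton R x))
      (pow_mem (Algebra.subset_adjoin (by simp)) n)

section FractionField

variable {K : Type*} [Field K] {f g z : K[X][Y]}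

theorem algebraMap_mem_subfieldGen (hz : z ∈ Algebra.adjoin K {f, g}) :
    algebraMap K[X][Y] (FractionRing K[X][Y]) z ∈ subfieldGen f g := by
  induction hz using Algebra.adjoin_induction with
  | mem x hx =>
    rcases hx with rfl | rfl
    exacts [Subfield.subset_closure (Or.inr (Or.inl rfl)),
      Subfield.subset_closure (Or.inr (Or.inr rfl))]
  | algebraMap k => exact Subfield.subset_closure (Or.inl ⟨k, rfl⟩)
  | add x y _ _ hx hy => rw [map_add]; exact add_mem hx hy
  | mul x y _ _ hx hy => rw [map_mul]; exact mul_mem hx hy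

theorem exists_mul_aevalAeval_eq_of_mem_subfieldGen
    (hz : algebraMap K[X][Y] (FractionRing K[X][Y]) z ∈ subfieldGen f g) :
    ∃ P Q : K[X][Y], aevalAeval f g Q ≠ 0 ∧ z * aevalAeval f g Q = aevalAeval f g P := by
  set ι := algebraMap K[X][Y] (FractionRing K[X][Y])
  rw [subfieldGen, Subfield.mem_closure_iff] at hz
  obtain ⟨y, hy, w, hw, hyw⟩ := hz
  have hS : Set.range (fun k : K => ι (C (C k))) ∪ {ι f, ι g} ⊆
      (ι.comp (aevalAeval (R := K) f g).toRingHom).range := by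
    rintro _ (⟨k, rfl⟩ | rfl | rfl)
    exacts [⟨C (C k), by simp⟩, ⟨C X, by simp⟩, ⟨Y, by simp⟩]
  obtain ⟨P, rfl⟩ := Subring.closure_le.mpr hS hy
  obtain ⟨Q, rfl⟩ := Subring.closure_le.mpr hS hw
  have hι : Function.Injective ι := IsFractionRing.injective _ _
  simp only [RingHom.comp_apply, AlgHom.toRingHom_eq_coe, RingHom.coe_coe] at hyw
  by_cases hQ : aevalAeval f g Q = 0
  · rw [hQ, map_zero, div_zero, eq_comm, map_eq_zero_iff ι hι] at hyw
    exact ⟨0, 1, by simp, by simp [hyw]⟩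
  · refine ⟨P, Q, hQ, hι ?_⟩
    rw [map_mul, ← hyw, div_mul_cancel₀ _ ((map_ne_zero_iff ι hι).mpr hQ)]

end FractionField

section Jacobian

variable {K : Type*} [Field K] [IsAlgClosed K]

theorem mem_adjoin_of_mul_aevalAeval_eq {D₁ D₂ : Derivation K K[X][Y] K[X][Y]} {f g : K[X][Y]}
    (h₁f : D₁ f = 1) (h₁g : D₁ g = 0) (h₂g : D₂ g = 1) {z P Q : K[X][Y]}
    (hQ : aevalAeval f g Q ≠ 0) (hz : z * aevalAeval f g Q = aevalAeval f g P) :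
    z ∈ Algebra.adjoin K {f, g} := by
  obtain ⟨P', Q', D, hPQ', rfl, rfl⟩ := UniqueFactorizationMonoid.exists_reduced_factors' P Q
    (by rintro rfl; simp at hQ)
  rw [map_mul] at hQ
  rw [map_mul, map_mul, mul_left_comm] at hz
  replace hz := mul_left_cancel₀ (left_ne_zero_of_mul hQ) hz
  have hunit : IsUnit (aevalAeval f g Q') := by
    by_contra hnu
    obtain ⟨p, hp, hpQ'⟩ := WfDvdMonoid.exists_irreducible_factor hnu (right_ne_zero_of_mul hQ)
    exact not_prime_dvd_aevalAeval_of_isRelPrime h₁f h₁g h₂g hp.prime hPQ'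
      (hz ▸ hpQ'.mul_left z) hpQ'
  obtain ⟨r, hr, hrQ'⟩ := Polynomial.isUnit_iff.mp hunit
  obtain ⟨k, hk, rfl⟩ := Polynomial.isUnit_iff.mp hr
  have : z = aevalAeval f g P' * C (C k⁻¹) := by
    rw [← hz, ← hrQ', mul_assoc, ← C_mul, ← C_mul, mul_inv_cancel₀ hk.ne_zero, C_1, C_1, mul_one]
  rw [this]
  exact mul_mem (aevalAeval_mem_adjoin f g P') (Subalgebra.algebraMap_mem _ k⁻¹)

end Jacobian

theorem field_gen_iff_ring_gen_general {K : Type*} [Field K] [IsAlgClosed K]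
    (f g : Polynomial (Polynomial K))
    (hJac : ∃ c : K, c ≠ 0 ∧
      dx f * Polynomial.derivative g - Polynomial.derivative f * dx g
        = Polynomial.C (Polynomial.C c)) :
    subfieldGen f g = ⊤ ↔ Algebra.adjoin K ({f, g} : Set (Polynomial (Polynomial K))) = ⊤ := by
  obtain ⟨c, hc, hJac⟩ := hJac
  have hJ : IsUnit (derivX f * derivY g - derivY f * derivX g) := by
    rw [derivX_apply, derivX_apply, derivY_apply, derivY_apply, hJac]
    exact isUnit_C.mpr (isUnit_C.mpr hc.isUnit)
  obtain ⟨D₁, h₁f, h₁g⟩ := Derivation.exists_apply_eq_one_apply_eq_zero _ _ hJ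
  have hJ' : IsUnit (derivX g * derivY f - derivY g * derivX f) := by
    rw [← neg_sub, mul_comm (derivX g), mul_comm (derivY g)]
    exact hJ.neg
  obtain ⟨D₂, h₂g, -⟩ := Derivation.exists_apply_eq_one_apply_eq_zero _ _ hJ'
  constructor
  · refine fun h => eq_top_iff.mpr fun z _ => ?_
    obtain ⟨P, Q, hQ, hz⟩ := exists_mul_aevalAeval_eq_of_mem_subfieldGen (h ▸ Subfield.mem_top _)
    exact mem_adjoin_of_mul_aevalAeval_eq h₁f h₁g h₂g hQ hz
  · refine fun h => eq_top_iff.mpr fun x _ => ?_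
    obtain ⟨a, b, -, rfl⟩ := IsFractionRing.div_surjective (A := K[X][Y]) x
    exact div_mem (algebraMap_mem_subfieldGen (h ▸ trivial))
      (algebraMap_mem_subfieldGen (h ▸ trivial))

/-- For a Jacobian pair `(f, g)`: `K(f,g) = K(x,y)` if and only if `K[f,g] = K[x,y]`. -/
theorem field_gen_iff_ring_gen {K : Type*} [Field K] [IsAlgClosed K] [CharZero K]
    (f g : Polynomial (Polynomial K)) (hf : f.Monic) (hg : g.Monic)
    (hfdeg : 1 ≤ f.natDegree) (hgdeg : 1 ≤ g.natDegree)
    (hJac : ∃ c : K, c ≠ 0 ∧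
      dx f * Polynomial.derivative g - Polynomial.derivative f * dx g
        = Polynomial.C (Polynomial.C c)) :
    subfieldGen f g = ⊤ ↔ Algebra.adjoin K ({f, g} : Set (Polynomial (Polynomial K))) = ⊤ :=
  field_gen_iff_ring_gen_general f g hJac

end
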